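/- Let d ≥ 3 be odd, so ρ = (d−1)/2 is a positive integer. Let ψ be a Schwartz function on ℝ whose Fourier transform ψ̂ is supported in the annulus {r : c ≤ |r| ≤ C} for some 0 < c < C. For Λ > 1 and k ∈ ℤ define K_{Λ,k}(r) = (2π)^{−1/2} · ((−1/(2π sinh r)) d/dr)^{ρ} [ ψ̂(2^{−k} r) e^{irΛ} + ψ̂(−2^{−k} r) e^{−irΛ} ] for r > 0. Then there exists a constant A, depending only on d, ψ, such that for all Λ > 1, all k with 2^k ≥ Λ^{−1}, and all r > 0: |K_{Λ,k}(r)| ≤ A · (Λ / sinh(c·2^k))^{ρ} · [ 𝟙_{c·2^k ≤ r ≤ C·2^k} + 𝟙_{r ≤ c·2^k} · (2^{−k} Λ^{−1})^{10} ]. -/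

import Mathlib

/-!
Off the band `c 2^k ≤ r ≤ C 2^k` the function `m̂` vanishes near `r`, hence so do all its images
under the operator `(-1/(2π sinh r)) ∂_r`. On `(0, ∞)`, the `n`-th image of `m̂` is `sinh⁻ⁿ r` times
a finite sum of monomials `a coth^b(r) ψ̂^{(j)}(±2^{-k} r) e^{±iΛr}` with `b, j ≤ n`. One more
application multiplies the weight `∑ |a| Λ^b` of such a sum by at most `(3n + 2) Λ`, because
differentiating a monomial produces a factor `±2^{-k}`, `±iΛ` or `b (1 - coth²)`, and `2^{-k} ≤ Λ`.
On the band, `coth r ≤ 1 + 1/r ≤ (1 + 1/c) Λ` and `sinh r ≥ sinh (c 2^k)`, which gives the bound.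
-/

noncomputable section

open Complex

namespace HypKernel

/-- The operator `g ↦ (-1/(2π sinh r)) ∂_r g` appearing in the formula for radial
convolution kernels on odd-dimensional hyperbolic space. -/
def hypDeriv (g : ℝ → ℂ) : ℝ → ℂ :=
  fun r => (((-1 : ℝ) / (2 * Real.pi * Real.sinh r) : ℝ) : ℂ) * deriv g r

/-- The convolution kernel `K_{Λ,k}` of the radial multiplier
`2^k ψ(2^k(λ-Λ)) + 2^k ψ(2^k(-λ-Λ))` on `ℍ^d` for odd `d = 2ρ+1`, given by the
explicit formula `K(r) = (2π)^{-1/2} ((-1/(2π sinh r)) ∂_r)^ρ m̂(r)`. -/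
def kernelK (ρ : ℕ) (ψ : SchwartzMap ℝ ℂ) (Λ : ℝ) (k : ℤ) (r : ℝ) : ℂ :=
  (((2 * Real.pi) ^ (-(1:ℝ)/2) : ℝ) : ℂ) *
    (hypDeriv^[ρ] (fun t =>
      VectorFourier.fourierIntegral Real.fourierChar MeasureTheory.volume (innerₗ ℝ) (fun u => ψ u) ((2:ℝ) ^ (-k) * t) *
        Complex.exp (I * (t : ℂ) * (Λ : ℂ)) +
      VectorFourier.fourierIntegral Real.fourierChar MeasureTheory.volume (innerₗ ℝ) (fun u => ψ u) (-((2:ℝ) ^ (-k) * t)) *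
        Complex.exp (-(I * (t : ℂ) * (Λ : ℂ))))) r

open FourierTransform Filter Topology
open scoped ContDiff

def coth (t : ℝ) : ℝ := Real.cosh t / Real.sinh t

lemma hasDerivAt_coth {t : ℝ} (ht : t ≠ 0) : HasDerivAt coth (1 - coth t ^ 2) t := by
  have hs : Real.sinh t ≠ 0 := Real.sinh_ne_zero.2 ht
  refine ((Real.hasDerivAt_cosh t).div (Real.hasDerivAt_sinh t) hs).congr_deriv ?_
  rw [coth]
  field_simp

lemma coth_nonneg {t : ℝ} (ht : 0 ≤ t) : 0 ≤ coth t :=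
  div_nonneg (Real.cosh_pos t).le (Real.sinh_nonneg_iff.2 ht)

lemma coth_le_one_add_inv {t : ℝ} (ht : 0 < t) : coth t ≤ 1 + t⁻¹ := by
  have hs : 0 < Real.sinh t := Real.sinh_pos_iff.2 ht
  have hcosh : Real.cosh t = Real.sinh t + Real.exp (-t) := by linarith [Real.cosh_sub_sinh t]
  have hexp : Real.exp (-t) * t ≤ Real.sinh t :=
    calc Real.exp (-t) * t ≤ 1 * t := by gcongr; exact Real.exp_le_one_iff.2 (by linarith)
      _ ≤ Real.sinh t := by simpa using Real.self_le_sinh_iff.2 ht.le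
  rw [coth, div_le_iff₀ hs, hcosh, add_mul, one_mul, add_le_add_iff_left, ← div_eq_inv_mul,
    le_div_iff₀ ht]
  exact hexp

lemma hasDerivAt_inv_sinh_pow (n : ℕ) {t : ℝ} (ht : t ≠ 0) :
    HasDerivAt (fun x => (Real.sinh x)⁻¹ ^ n) (-n * coth t * (Real.sinh t)⁻¹ ^ n) t := by
  have hs : Real.sinh t ≠ 0 := Real.sinh_ne_zero.2 ht
  refine (((Real.hasDerivAt_sinh t).fun_inv hs).fun_pow n).congr_deriv ?_
  rcases n with _ | n
  · simp
  · rw [coth, Nat.add_sub_cancel]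
    ring

variable {φ : ℝ → ℂ}

lemma hasDerivAt_iteratedDeriv (hφ : ContDiff ℝ ∞ φ) (j : ℕ) (x : ℝ) :
    HasDerivAt (iteratedDeriv j φ) (iteratedDeriv (j + 1) φ x) x := by
  rw [iteratedDeriv_succ]
  exact ((hφ.differentiable_iteratedDeriv j (mod_cast WithTop.coe_lt_top _)) x).hasDerivAt

structure CothMonomial where
  coeff : ℂ
  cothPow : ℕ
  order : ℕ
  scale : ℝ
  freq : ℝ

namespace CothMonomial

def eval (φ : ℝ → ℂ) (p : CothMonomial) (t : ℝ) : ℂ :=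
  p.coeff * (coth t : ℂ) ^ p.cothPow * iteratedDeriv p.order φ (p.scale * t) *
    Complex.exp (I * t * p.freq)

/-- Product rule, with `coth' = 1 - coth²`. -/
def derivTerms (p : CothMonomial) : Multiset CothMonomial :=
  { { p with coeff := p.cothPow * p.coeff, cothPow := p.cothPow - 1 },
    { p with coeff := -(p.cothPow * p.coeff), cothPow := p.cothPow + 1 },
    { p with coeff := p.scale * p.coeff, order := p.order + 1 },
    { p with coeff := I * p.freq * p.coeff } }

lemma hasDerivAt_eval (hφ : ContDiff ℝ ∞ φ) (p : CothMonomial) {t : ℝ} (ht : t ≠ 0) :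
    HasDerivAt (p.eval φ) ((p.derivTerms.map (·.eval φ t)).sum) t := by
  obtain ⟨a, b, j, δ, μ⟩ := p
  have hcoth := ((hasDerivAt_coth ht).ofReal_comp.fun_pow b).const_mul a
  have hφδ := (hasDerivAt_iteratedDeriv hφ j (δ * t)).scomp t
    ((hasDerivAt_id t).const_mul δ)
  have hexp := (((hasDerivAt_id t).ofReal_comp.const_mul I).mul_const (μ : ℂ)).cexp
  refine ((hcoth.mul hφδ).mul hexp).congr_deriv ?_
  simp only [derivTerms, eval, Multiset.insert_eq_cons, Multiset.map_cons,
    Multiset.map_singleton, Multiset.sum_cons, Multiset.sum_singleton, Function.comp_apply,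
    Pi.mul_apply, id, mul_one, Complex.real_smul]
  rcases b with _ | b
  · simp only [CharP.cast_eq_zero, zero_tsub, pow_zero, mul_one, ofReal_sub, ofReal_one,
      ofReal_pow, zero_mul, mul_zero, zero_add, neg_zero, pow_one]
    ring
  · push_cast [Nat.add_sub_cancel]
    ring

/-- Applying `hypDeriv` to `sinh⁻ⁿ · p.eval φ` gives `sinh⁻⁽ⁿ⁺¹⁾` times the sum of these terms. -/
def hypDerivStep (n : ℕ) (p : CothMonomial) : Multiset CothMonomial :=
  ({ p with coeff := -n * p.coeff, cothPow := p.cothPow + 1 } ::ₘ p.derivTerms).map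
    fun q => { q with coeff := -(2 * Real.pi)⁻¹ * q.coeff }

lemma sum_eval_hypDerivStep (n : ℕ) (p : CothMonomial) (t : ℝ) :
    ((p.hypDerivStep n).map (·.eval φ t)).sum =
      -(2 * Real.pi)⁻¹ * (-n * coth t * p.eval φ t + (p.derivTerms.map (·.eval φ t)).sum) := by
  have hscale : ∀ q : CothMonomial,
      eval φ { q with coeff := -(2 * Real.pi)⁻¹ * q.coeff } t = -(2 * Real.pi)⁻¹ * q.eval φ t :=
    fun q => by simp only [eval]; ring
  have hfirst : eval φ { p with coeff := -n * p.coeff, cothPow := p.cothPow + 1 } t =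
      -n * coth t * p.eval φ t := by
    simp only [eval, pow_succ]; ring
  rw [hypDerivStep, Multiset.map_map, Function.comp_def]
  simp only [hscale, Multiset.sum_map_mul_left, Multiset.map_cons, Multiset.sum_cons, hfirst,
    mul_add]

def weight (E : ℝ) (p : CothMonomial) : ℝ := ‖p.coeff‖ * E ^ p.cothPow

def Admissible (n : ℕ) (E : ℝ) (p : CothMonomial) : Prop :=
  p.cothPow ≤ n ∧ p.order ≤ n ∧ |p.scale| ≤ E ∧ |p.freq| ≤ E

lemma Admissible.hypDerivStep {n : ℕ} {E : ℝ} {p : CothMonomial} (hp : p.Admissible n E) :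
    ∀ q ∈ p.hypDerivStep n, q.Admissible (n + 1) E := by
  obtain ⟨hb, hj, hδ, hμ⟩ := hp
  intro q hq
  obtain ⟨q', hq', rfl⟩ := Multiset.mem_map.1 hq
  simp only [derivTerms, Multiset.insert_eq_cons, Multiset.mem_cons,
    Multiset.mem_singleton] at hq'
  rcases hq' with rfl | rfl | rfl | rfl | rfl <;>
    exact ⟨by dsimp only; omega, by dsimp only; omega, hδ, hμ⟩

lemma sum_weight_hypDerivStep_le {n : ℕ} {E : ℝ} (hE : 1 ≤ E) {p : CothMonomial}
    (hp : p.Admissible n E) :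
    ((p.hypDerivStep n).map (weight E)).sum ≤ (3 * n + 2) * E * p.weight E := by
  obtain ⟨a, b, j, δ, μ⟩ := p
  obtain ⟨hb, -, hδ, hμ⟩ := hp
  rw [CothMonomial.hypDerivStep, Multiset.map_map, Function.comp_def]
  simp only [Multiset.map_cons, Multiset.sum_cons, derivTerms, Multiset.insert_eq_cons,
    Multiset.map_singleton, Multiset.sum_singleton, weight, norm_mul, norm_neg,
    Complex.norm_natCast, Complex.norm_real, Complex.norm_I, Real.norm_eq_abs, one_mul]
  set w := ‖a‖ * E ^ b
  have hw : 0 ≤ w := by positivity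
  have hbn : (b : ℝ) ≤ n := by exact_mod_cast hb
  have hsucc : ‖a‖ * E ^ (b + 1) = E * w := by rw [pow_succ]; ring
  have hpred : ‖a‖ * E ^ (b - 1) ≤ E * w := by
    rw [← hsucc]
    exact mul_le_mul_of_nonneg_left (pow_le_pow_right₀ hE (by omega)) (norm_nonneg a)
  have hterms : n * ‖a‖ * E ^ (b + 1) + b * ‖a‖ * E ^ (b - 1) + b * ‖a‖ * E ^ (b + 1) +
      |δ| * ‖a‖ * E ^ b + |μ| * ‖a‖ * E ^ b ≤ (3 * n + 2) * E * w := by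
    have h1 := mul_le_mul hbn hpred (by positivity) (by positivity)
    have h2 := mul_le_mul_of_nonneg_right hbn (by positivity : 0 ≤ E * w)
    have h3 := mul_le_mul_of_nonneg_right hδ hw
    have h4 := mul_le_mul_of_nonneg_right hμ hw
    simp only [mul_assoc, hsucc] at h1 h2 h3 h4 ⊢
    linarith
  have hπ : |(2 * Real.pi)⁻¹| ≤ 1 := by
    rw [abs_of_pos (by positivity)]
    exact inv_le_one_of_one_le₀ (by linarith [Real.pi_gt_three])
  calc _ = |(2 * Real.pi)⁻¹| * (n * ‖a‖ * E ^ (b + 1) + b * ‖a‖ * E ^ (b - 1) +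
        b * ‖a‖ * E ^ (b + 1) + |δ| * ‖a‖ * E ^ b + |μ| * ‖a‖ * E ^ b) := by ring
    _ ≤ 1 * ((3 * n + 2) * E * w) := by gcongr
    _ = _ := one_mul _

lemma norm_eval_le {n : ℕ} {E α M t : ℝ} {p : CothMonomial} (hp : p.Admissible n E)
    (hM : ∀ j ≤ n, ∀ x, ‖iteratedDeriv j φ x‖ ≤ M) (hα : 1 ≤ α) (ht : 0 ≤ t)
    (hcoth : coth t ≤ α * E) : ‖p.eval φ t‖ ≤ α ^ n * M * p.weight E := by
  obtain ⟨hb, hj, -, -⟩ := hp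
  have hM0 : 0 ≤ M := (norm_nonneg _).trans (hM 0 (Nat.zero_le n) 0)
  have hE : 0 ≤ E := nonneg_of_mul_nonneg_right ((coth_nonneg ht).trans hcoth) (by linarith)
  have hexp : ‖Complex.exp (I * t * p.freq)‖ = 1 := by
    rw [show I * t * p.freq = ((t * p.freq : ℝ) : ℂ) * I by push_cast; ring]
    exact Complex.norm_exp_ofReal_mul_I _
  rw [eval, norm_mul, norm_mul, norm_mul, hexp, mul_one, norm_pow, Complex.norm_real,
    Real.norm_of_nonneg (coth_nonneg ht)]
  calc ‖p.coeff‖ * coth t ^ p.cothPow * ‖iteratedDeriv p.order φ (p.scale * t)‖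
      ≤ ‖p.coeff‖ * (α * E) ^ p.cothPow * M := by
        gcongr
        · exact coth_nonneg ht
        · exact hM _ hj _
    _ = α ^ p.cothPow * M * (‖p.coeff‖ * E ^ p.cothPow) := by rw [mul_pow]; ring
    _ ≤ α ^ n * M * (‖p.coeff‖ * E ^ p.cothPow) := by gcongr

end CothMonomial

open CothMonomial

def IsCothExpansion (φ : ℝ → ℂ) (n : ℕ) (F : ℝ → ℂ) (L : Multiset CothMonomial) : Prop :=
  ∀ t, 0 < t → F t = ((Real.sinh t)⁻¹ ^ n : ℝ) * (L.map (·.eval φ t)).sum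

lemma hasDerivAt_sum_eval (hφ : ContDiff ℝ ∞ φ) (L : Multiset CothMonomial) {t : ℝ} (ht : t ≠ 0) :
    HasDerivAt (fun x => (L.map (·.eval φ x)).sum)
      ((L.map fun p => (p.derivTerms.map (·.eval φ t)).sum).sum) t := by
  induction L using Multiset.induction_on with
  | empty => simpa using hasDerivAt_const t (0 : ℂ)
  | cons p L ih =>
    simp only [Multiset.map_cons, Multiset.sum_cons]
    exact (p.hasDerivAt_eval hφ ht).add ih

lemma IsCothExpansion.hypDeriv (hφ : ContDiff ℝ ∞ φ) {n : ℕ} {F : ℝ → ℂ}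
    {L : Multiset CothMonomial} (hF : IsCothExpansion φ n F L) :
    IsCothExpansion φ (n + 1) (hypDeriv F) (L.bind (hypDerivStep n)) := by
  intro t ht
  have hF' : HasDerivAt F (((-n * coth t * (Real.sinh t)⁻¹ ^ n : ℝ) : ℂ) *
      (L.map (·.eval φ t)).sum + ((Real.sinh t)⁻¹ ^ n : ℝ) *
      (L.map fun p => (p.derivTerms.map (·.eval φ t)).sum).sum) t := by
    refine (((hasDerivAt_inv_sinh_pow n ht.ne').ofReal_comp).mul
      (hasDerivAt_sum_eval hφ L ht.ne')).congr_of_eventuallyEq ?_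
    filter_upwards [Ioi_mem_nhds ht] with x hx using hF x hx
  have hs : Real.sinh t ≠ 0 := (Real.sinh_pos_iff.2 ht).ne'
  rw [HypKernel.hypDeriv, hF'.deriv, Multiset.map_bind, Multiset.sum_bind]
  simp only [sum_eval_hypDerivStep, Multiset.sum_map_mul_left, Multiset.sum_map_add]
  push_cast
  field_simp
  ring

def hypDerivExpansion (L : Multiset CothMonomial) : ℕ → Multiset CothMonomial
  | 0 => L
  | n + 1 => (hypDerivExpansion L n).bind (hypDerivStep n)

lemma IsCothExpansion.iterate_hypDeriv (hφ : ContDiff ℝ ∞ φ) {F : ℝ → ℂ}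
    {L : Multiset CothMonomial} (hF : IsCothExpansion φ 0 F L) (n : ℕ) :
    IsCothExpansion φ n (HypKernel.hypDeriv^[n] F) (hypDerivExpansion L n) := by
  induction n with
  | zero => exact hF
  | succ n ih =>
    rw [Function.iterate_succ_apply']
    exact ih.hypDeriv hφ

lemma admissible_of_mem_hypDerivExpansion {E : ℝ} {L : Multiset CothMonomial}
    (hL : ∀ p ∈ L, p.Admissible 0 E) (n : ℕ) :
    ∀ p ∈ hypDerivExpansion L n, p.Admissible n E := by
  induction n with
  | zero => exact hL
  | succ n ih =>
    intro q hq
    obtain ⟨p, hp, hq⟩ := Multiset.mem_bind.1 hq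
    exact (ih p hp).hypDerivStep q hq

lemma sum_weight_hypDerivExpansion_le {E : ℝ} (hE : 1 ≤ E) {L : Multiset CothMonomial}
    (hL : ∀ p ∈ L, p.Admissible 0 E) (n : ℕ) :
    ((hypDerivExpansion L n).map (weight E)).sum ≤
      (∏ m ∈ Finset.range n, (3 * m + 2 : ℝ)) * E ^ n * (L.map (weight E)).sum := by
  induction n with
  | zero => simp [hypDerivExpansion]
  | succ n ih =>
    calc ((hypDerivExpansion L (n + 1)).map (weight E)).sum
        = ((hypDerivExpansion L n).map fun p => ((p.hypDerivStep n).map (weight E)).sum).sum := by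
          rw [hypDerivExpansion, Multiset.map_bind, Multiset.sum_bind]
      _ ≤ ((hypDerivExpansion L n).map fun p => (3 * n + 2) * E * p.weight E).sum :=
          Multiset.sum_map_le_sum_map _ _ fun p hp =>
            sum_weight_hypDerivStep_le hE (admissible_of_mem_hypDerivExpansion hL n p hp)
      _ = (3 * n + 2) * E * ((hypDerivExpansion L n).map (weight E)).sum :=
          Multiset.sum_map_mul_left
      _ ≤ (3 * n + 2) * E *
          ((∏ m ∈ Finset.range n, (3 * m + 2 : ℝ)) * E ^ n * (L.map (weight E)).sum) := by
          gcongr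
      _ = _ := by rw [Finset.prod_range_succ, pow_succ]; ring

lemma IsCothExpansion.norm_le {n : ℕ} {F : ℝ → ℂ} {L : Multiset CothMonomial}
    (hF : IsCothExpansion φ n F L) {E α M t : ℝ} (hL : ∀ p ∈ L, p.Admissible n E)
    (hM : ∀ j ≤ n, ∀ x, ‖iteratedDeriv j φ x‖ ≤ M) (hα : 1 ≤ α) (ht : 0 < t)
    (hcoth : coth t ≤ α * E) :
    ‖F t‖ ≤ (Real.sinh t)⁻¹ ^ n * (α ^ n * M * (L.map (weight E)).sum) := by
  have hs : 0 < Real.sinh t := Real.sinh_pos_iff.2 ht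
  rw [hF t ht, norm_mul, Complex.norm_real, Real.norm_of_nonneg (by positivity)]
  gcongr
  calc ‖(L.map (·.eval φ t)).sum‖ ≤ (L.map fun p => ‖p.eval φ t‖).sum := by
        simpa [Multiset.map_map] using norm_multiset_sum_le (L.map (·.eval φ t))
    _ ≤ (L.map fun p => α ^ n * M * p.weight E).sum :=
        Multiset.sum_map_le_sum_map _ _ fun p hp => norm_eval_le (hL p hp) hM hα ht.le hcoth
    _ = α ^ n * M * (L.map (weight E)).sum := Multiset.sum_map_mul_left

theorem norm_hypDeriv_iterate_le (hφ : ContDiff ℝ ∞ φ) {F : ℝ → ℂ} {L : Multiset CothMonomial}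
    (hF : IsCothExpansion φ 0 F L) {E α M t : ℝ} (hE : 1 ≤ E) (hL : ∀ p ∈ L, p.Admissible 0 E)
    {n : ℕ} (hM : ∀ j ≤ n, ∀ x, ‖iteratedDeriv j φ x‖ ≤ M) (hα : 1 ≤ α) (ht : 0 < t)
    (hcoth : coth t ≤ α * E) :
    ‖hypDeriv^[n] F t‖ ≤
      (∏ m ∈ Finset.range n, (3 * m + 2 : ℝ)) * α ^ n * M * (L.map (weight E)).sum *
        (E / Real.sinh t) ^ n := by
  have hM0 : 0 ≤ M := (norm_nonneg _).trans (hM 0 (Nat.zero_le n) 0)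
  have hs : 0 < Real.sinh t := Real.sinh_pos_iff.2 ht
  calc ‖hypDeriv^[n] F t‖
      ≤ (Real.sinh t)⁻¹ ^ n * (α ^ n * M * ((hypDerivExpansion L n).map (weight E)).sum) :=
        (hF.iterate_hypDeriv hφ n).norm_le (admissible_of_mem_hypDerivExpansion hL n) hM hα ht
          hcoth
    _ ≤ (Real.sinh t)⁻¹ ^ n * (α ^ n * M *
          ((∏ m ∈ Finset.range n, (3 * m + 2 : ℝ)) * E ^ n * (L.map (weight E)).sum)) := by
        gcongr
        exact sum_weight_hypDerivExpansion_le hE hL n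
    _ = _ := by rw [div_pow, div_eq_mul_inv, inv_pow]; ring

lemma hypDeriv_iterate_eventuallyEq_zero {f : ℝ → ℂ} {r : ℝ} (hf : f =ᶠ[𝓝 r] 0) (n : ℕ) :
    hypDeriv^[n] f =ᶠ[𝓝 r] 0 := by
  induction n with
  | zero => exact hf
  | succ n ih =>
    rw [Function.iterate_succ']
    filter_upwards [ih.eventuallyEq_nhds] with x hx
    simp [HypKernel.hypDeriv, hx.deriv_eq]

/-- The function `m̂` of the formula `K = (2π)^{-1/2} ((-1/(2π sinh r)) ∂_r)^ρ m̂`. -/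
def multiplierHat (φ : ℝ → ℂ) (δ μ t : ℝ) : ℂ :=
  φ (δ * t) * Complex.exp (I * t * μ) + φ (-(δ * t)) * Complex.exp (-(I * t * μ))

lemma kernelK_eq (ρ : ℕ) (ψ : SchwartzMap ℝ ℂ) (Λ : ℝ) (k : ℤ) (r : ℝ) :
    kernelK ρ ψ Λ k r = (((2 * Real.pi) ^ (-(1:ℝ)/2) : ℝ) : ℂ) *
      hypDeriv^[ρ] (multiplierHat (𝓕 ⇑ψ) ((2:ℝ) ^ (-k)) Λ) r :=
  rfl

lemma isCothExpansion_multiplierHat (φ : ℝ → ℂ) (δ μ : ℝ) :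
    IsCothExpansion φ 0 (multiplierHat φ δ μ) {⟨1, 0, 0, δ, μ⟩, ⟨1, 0, 0, -δ, -μ⟩} := by
  intro t _
  simp only [multiplierHat, Multiset.insert_eq_cons, Multiset.map_cons, Multiset.map_singleton,
    Multiset.sum_cons, Multiset.sum_singleton, eval, iteratedDeriv_zero]
  push_cast
  ring_nf

lemma multiplierHat_eventuallyEq_zero {φ : ℝ → ℂ} {c C δ r : ℝ}
    (hφ : ∀ s, φ s ≠ 0 → c ≤ |s| ∧ |s| ≤ C) (hδ : 0 < δ) (hr : δ * |r| < c ∨ C < δ * |r|)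
    (μ : ℝ) : multiplierHat φ δ μ =ᶠ[𝓝 r] 0 := by
  have hvanish : ∀ s, |s| < c ∨ C < |s| → φ s = 0 := fun s hs => by
    by_contra h
    have := hφ s h
    rcases hs with hs | hs <;> linarith
  have hev : ∀ᶠ t in 𝓝 r, δ * |t| < c ∨ C < δ * |t| := by
    have hcont : Continuous fun t => δ * |t| := by fun_prop
    rcases hr with hr | hr
    · exact (hcont.tendsto r |>.eventually (gt_mem_nhds hr)).mono fun _ => Or.inl
    · exact (hcont.tendsto r |>.eventually (lt_mem_nhds hr)).mono fun _ => Or.inr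
  filter_upwards [hev] with t ht
  have habs : |δ * t| = δ * |t| := by rw [abs_mul, abs_of_pos hδ]
  rw [multiplierHat, hvanish _ (habs ▸ ht), hvanish _ (by rwa [abs_neg, habs])]
  simp

lemma exists_forall_norm_iteratedDeriv_le {F : Type*} [NormedAddCommGroup F] [NormedSpace ℝ F]
    (f : SchwartzMap ℝ F) (n : ℕ) : ∃ M, ∀ j ≤ n, ∀ x, ‖iteratedDeriv j f x‖ ≤ M := by
  refine ⟨∑ j ∈ Finset.range (n + 1), SchwartzMap.seminorm ℝ 0 j f, fun j hj x => ?_⟩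
  calc ‖iteratedDeriv j f x‖ ≤ SchwartzMap.seminorm ℝ 0 j f := by
        simpa using f.le_seminorm' ℝ 0 j x
    _ ≤ _ := Finset.single_le_sum (f := fun i => SchwartzMap.seminorm ℝ 0 i f)
        (fun i _ => apply_nonneg _ _) (Finset.mem_range.2 (by omega))

lemma kernelK_eq_zero_off_band {ρ : ℕ} {ψ : SchwartzMap ℝ ℂ} {c C : ℝ}
    (hsupp : ∀ s, 𝓕 (⇑ψ) s ≠ 0 → c ≤ |s| ∧ |s| ≤ C) (Λ : ℝ) (k : ℤ) {r : ℝ} (hr : 0 < r)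
    (hband : ¬(c * 2 ^ k ≤ r ∧ r ≤ C * 2 ^ k)) : kernelK ρ ψ Λ k r = 0 := by
  have h2k : (0 : ℝ) < 2 ^ k := zpow_pos two_pos k
  have hr' : (2 : ℝ) ^ (-k) * |r| < c ∨ C < (2 : ℝ) ^ (-k) * |r| := by
    rw [abs_of_pos hr, zpow_neg, ← div_eq_inv_mul, div_lt_iff₀ h2k, lt_div_iff₀ h2k]
    by_contra! h
    exact hband h
  rw [kernelK_eq, (hypDeriv_iterate_eventuallyEq_zero
    (multiplierHat_eventuallyEq_zero hsupp (zpow_pos two_pos _) hr' Λ) ρ).eq_of_nhds]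
  simp

lemma norm_kernelK_le {ρ : ℕ} {ψ : SchwartzMap ℝ ℂ} {M : ℝ}
    (hM : ∀ j ≤ ρ, ∀ x, ‖iteratedDeriv j (𝓕 ⇑ψ) x‖ ≤ M) {c Λ r : ℝ} {k : ℤ} (hc : 0 < c)
    (hΛ : 1 ≤ Λ) (hk : Λ⁻¹ ≤ 2 ^ k) (hr : c * 2 ^ k ≤ r) :
    ‖kernelK ρ ψ Λ k r‖ ≤
      (2 * Real.pi) ^ (-(1:ℝ)/2) * (∏ m ∈ Finset.range ρ, (3 * m + 2 : ℝ)) * (1 + c⁻¹) ^ ρ * M *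
        2 * (Λ / Real.sinh (c * 2 ^ k)) ^ ρ := by
  have hck : 0 < c * 2 ^ k := mul_pos hc (zpow_pos two_pos k)
  have hr0 : 0 < r := hck.trans_le hr
  have hδ : (2 : ℝ) ^ (-k) ≤ Λ := by
    rw [zpow_neg]
    exact inv_le_of_inv_le₀ (by positivity) hk
  have hcoth : coth r ≤ (1 + c⁻¹) * Λ :=
    calc coth r ≤ 1 + r⁻¹ := coth_le_one_add_inv hr0
      _ ≤ 1 + c⁻¹ * 2 ^ (-k) := by
        rw [zpow_neg, ← mul_inv]
        gcongr
      _ ≤ (1 + c⁻¹) * Λ := by nlinarith [inv_pos.2 hc]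
  have hadm : ∀ p ∈ ({⟨1, 0, 0, 2 ^ (-k), Λ⟩, ⟨1, 0, 0, -2 ^ (-k), -Λ⟩} : Multiset CothMonomial),
      p.Admissible 0 Λ := by
    have h2 : |(2 : ℝ) ^ (-k)| ≤ Λ := by rwa [abs_of_pos (zpow_pos two_pos _)]
    have hΛ' : |Λ| ≤ Λ := (abs_of_pos (by linarith)).le
    simp only [Multiset.insert_eq_cons, Multiset.mem_cons, Multiset.mem_singleton]
    rintro p (rfl | rfl)
    · exact ⟨le_rfl, le_rfl, h2, hΛ'⟩
    · exact ⟨le_rfl, le_rfl, by rwa [abs_neg], by rwa [abs_neg]⟩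
  have hφ : ContDiff ℝ ∞ (𝓕 ⇑ψ) := (SchwartzMap.fourierTransformCLM ℝ ψ).smooth ⊤
  have key := norm_hypDeriv_iterate_le hφ (isCothExpansion_multiplierHat _ _ _) hΛ hadm hM
    (le_add_of_nonneg_right (inv_pos.2 hc).le) hr0 hcoth
  have hsinh : Real.sinh (c * 2 ^ k) ≤ Real.sinh r := Real.sinh_le_sinh.2 hr
  have hsinh0 : 0 < Real.sinh (c * 2 ^ k) := Real.sinh_pos_iff.2 hck
  have hM0 : 0 ≤ M := (norm_nonneg _).trans (hM 0 (Nat.zero_le ρ) 0)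
  simp only [Multiset.insert_eq_cons, Multiset.map_cons, Multiset.map_singleton, Multiset.sum_cons,
    Multiset.sum_singleton, weight, norm_one, pow_zero, mul_one] at key
  rw [kernelK_eq, norm_mul, Complex.norm_real, Real.norm_of_nonneg (by positivity)]
  calc _ ≤ (2 * Real.pi) ^ (-(1:ℝ)/2) * ((∏ m ∈ Finset.range ρ, (3 * m + 2 : ℝ)) * (1 + c⁻¹) ^ ρ *
        M * (1 + 1) * (Λ / Real.sinh r) ^ ρ) := by gcongr
    _ ≤ _ := by
      rw [one_add_one_eq_two, ← mul_assoc, ← mul_assoc, ← mul_assoc, ← mul_assoc]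
      gcongr

theorem kernel_pointwise_bound_general (ρ : ℕ) (ψ : SchwartzMap ℝ ℂ)
    (c C : ℝ) (hc : 0 < c)
    (hsupp : ∀ r : ℝ, VectorFourier.fourierIntegral Real.fourierChar MeasureTheory.volume (innerₗ ℝ) (fun u => ψ u) r ≠ 0 → c ≤ |r| ∧ |r| ≤ C) :
    ∃ A : ℝ, ∀ Λ : ℝ, 1 < Λ → ∀ k : ℤ, Λ⁻¹ ≤ (2:ℝ) ^ k → ∀ r : ℝ, 0 < r →
      ‖kernelK ρ ψ Λ k r‖ ≤
        A * (Λ / Real.sinh (c * (2:ℝ) ^ k)) ^ ρ *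
          ((if c * (2:ℝ) ^ k ≤ r ∧ r ≤ C * (2:ℝ) ^ k then (1:ℝ) else 0) +
            (if r ≤ c * (2:ℝ) ^ k then (1:ℝ) else 0) * ((2:ℝ) ^ (-k) * Λ⁻¹) ^ 10) := by
  obtain ⟨M, hM⟩ := exists_forall_norm_iteratedDeriv_le (SchwartzMap.fourierTransformCLM ℝ ψ) ρ
  have hM0 : 0 ≤ M := (norm_nonneg _).trans (hM 0 (Nat.zero_le ρ) 0)
  refine ⟨(2 * Real.pi) ^ (-(1:ℝ)/2) * (∏ m ∈ Finset.range ρ, (3 * m + 2 : ℝ)) * (1 + c⁻¹) ^ ρ *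
    M * 2, fun Λ hΛ k hk r hr => ?_⟩
  have hsinh0 : 0 < Real.sinh (c * 2 ^ k) := Real.sinh_pos_iff.2 (mul_pos hc (zpow_pos two_pos k))
  by_cases hband : c * 2 ^ k ≤ r ∧ r ≤ C * 2 ^ k
  · refine (norm_kernelK_le hM hc hΛ.le hk hband.1).trans
      (le_mul_of_one_le_right (by positivity) ?_)
    rw [if_pos hband]
    exact le_add_of_nonneg_right (by positivity)
  · rw [kernelK_eq_zero_off_band hsupp Λ k hr hband, norm_zero]
    have hΛ0 : 0 < Λ := by linarith
    positivity

/-- **Lemma (pointwise kernel bounds, odd dimension).**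
Let `d = 2ρ+1 ≥ 3` be odd, and `ψ` a Schwartz function whose Fourier transform is
supported in the annulus `{c ≤ |r| ≤ C}`, `0 < c < C`. Then there is a constant `A`
(depending only on `d`, `ψ`, `c`, `C`) such that for all `Λ > 1`, all `k ∈ ℤ` with
`2^k ≥ Λ⁻¹` and all `r > 0`,
`|K_{Λ,k}(r)| ≤ A (Λ/sinh(c·2^k))^ρ [𝟙_{c·2^k ≤ r ≤ C·2^k} + 𝟙_{r ≤ c·2^k}(2^{-k}Λ⁻¹)^{10}]`. -/
theorem kernel_pointwise_bound (ρ : ℕ) (hρ : 1 ≤ ρ) (ψ : SchwartzMap ℝ ℂ)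
    (c C : ℝ) (hc : 0 < c) (hcC : c < C)
    (hsupp : ∀ r : ℝ, VectorFourier.fourierIntegral Real.fourierChar MeasureTheory.volume (innerₗ ℝ) (fun u => ψ u) r ≠ 0 → c ≤ |r| ∧ |r| ≤ C) :
    ∃ A : ℝ, ∀ Λ : ℝ, 1 < Λ → ∀ k : ℤ, Λ⁻¹ ≤ (2:ℝ) ^ k → ∀ r : ℝ, 0 < r →
      ‖kernelK ρ ψ Λ k r‖ ≤
        A * (Λ / Real.sinh (c * (2:ℝ) ^ k)) ^ ρ *
          ((if c * (2:ℝ) ^ k ≤ r ∧ r ≤ C * (2:ℝ) ^ k then (1:ℝ) else 0) +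
            (if r ≤ c * (2:ℝ) ^ k then (1:ℝ) else 0) * ((2:ℝ) ^ (-k) * Λ⁻¹) ^ 10) :=
  kernel_pointwise_bound_general ρ ψ c C hc hsupp

end HypKernel
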